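/- For every real t with |t| < 1, the series defining G_i(t,k) converges for all i and k, and the generating function vectors satisfy G(t,k) = A·G(t,k-1) + t·B·G(t,k) for all k ≥ 1, where G(t,k) is the column vector (G_i(t,k))_{i∈S}. -/

import Mathlib

open Matrix Finset

/-- Probability of a path of a Markov chain with transition matrix `P`. -/
noncomputable def pathProb {S : Type*} [Fintype S] (P : Matrix S S ℝ) (n : ℕ)
    (x : Fin (n + 1) → S) : ℝ :=
  ∏ m : Fin n, P (x m.castSucc) (x m.succ)

/-- Number of indices `1 ≤ m ≤ n` with `X_m ∈ U`. -/
def occCount {S : Type*} [Fintype S] [DecidableEq S] (U : Finset S) (n : ℕ)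
    (x : Fin (n + 1) → S) : ℕ :=
  (Finset.univ.filter (fun m : Fin n => x m.succ ∈ U)).card

/-- `occProb P U i n k = Pr(N_n = k | X_0 = i)`. -/
noncomputable def occProb {S : Type*} [Fintype S] [DecidableEq S]
    (P : Matrix S S ℝ) (U : Finset S) (i : S) (n k : ℕ) : ℝ :=
  ∑ x ∈ Finset.univ.filter
      (fun x : Fin (n + 1) → S => x 0 = i ∧ occCount U n x = k),
    pathProb P n x
section aux
set_option linter.unusedSectionVars false
variable {S : Type*} [Fintype S] [DecidableEq S] (P : Matrix S S ℝ) (U : Finset S)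

lemma occCount_eq_sum (n : ℕ) (x : Fin (n + 1) → S) :
    occCount U n x = ∑ m : Fin n, if x m.succ ∈ U then 1 else 0 := by
  rw [occCount, Finset.card_filter]

lemma pathProb_cons (n : ℕ) (a : S) (y : Fin (n + 1) → S) :
    pathProb P (n + 1) (Fin.cons a y) = P a (y 0) * pathProb P n y := by
  unfold pathProb
  rw [Fin.prod_univ_succ]
  congr 1
  all_goals
    first
    | simp
    | (refine Finset.prod_congr rfl fun m _ => ?_
       rw [← Fin.succ_castSucc]
       simp)

lemma occCount_cons (n : ℕ) (a : S) (y : Fin (n + 1) → S) :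
    occCount U (n + 1) (Fin.cons a y) =
      (if y 0 ∈ U then 1 else 0) + occCount U n y := by
  rw [occCount_eq_sum, occCount_eq_sum, Fin.sum_univ_succ]
  congr 1
  all_goals
    first
    | simp
    | (refine Finset.sum_congr rfl fun m _ => ?_; simp)

lemma occProb_eq (i : S) (n k : ℕ) :
    occProb P U i n k = ∑ x : Fin (n + 1) → S,
      if x 0 = i ∧ occCount U n x = k then pathProb P n x else 0 := by
  rw [occProb, Finset.sum_filter]

lemma pathProb_nonneg (hP0 : ∀ i j, 0 ≤ P i j) (n : ℕ) (x : Fin (n + 1) → S) :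
    0 ≤ pathProb P n x :=
  Finset.prod_nonneg fun m _ => hP0 _ _

lemma sum_pathProb (hP1 : ∀ i, ∑ j, P i j = 1) (n : ℕ) :
    ∀ i : S, ∑ x : Fin (n + 1) → S, (if x 0 = i then pathProb P n x else 0) = 1 := by
  induction n with
  | zero =>
    intro i
    rw [Fintype.sum_equiv (Equiv.funUnique (Fin 1) S) _
      (fun a : S => if a = i then (1 : ℝ) else 0)]
    · simp
    · intro x
      simp [pathProb, Equiv.funUnique]
  | succ n ih =>
    intro i
    rw [Fintype.sum_equiv (Fin.consEquiv (fun _ : Fin (n + 2) => S)).symm _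
      (fun p : S × (Fin (n + 1) → S) =>
        if p.1 = i then P p.1 (p.2 0) * pathProb P n p.2 else 0)]
    · rw [Fintype.sum_prod_type]
      have pull : ∀ a : S, (∑ y : Fin (n + 1) → S,
          if a = i then P a (y 0) * pathProb P n y else 0)
          = if a = i then ∑ y : Fin (n + 1) → S, P a (y 0) * pathProb P n y
            else 0 := fun a => by split <;> simp
      simp only [pull]
      rw [Fintype.sum_ite_eq' i (fun a : S => ∑ y : Fin (n + 1) → S,
        P a (y 0) * pathProb P n y)]
      have key : ∀ y : Fin (n + 1) → S, P i (y 0) * pathProb P n y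
          = ∑ j : S, if y 0 = j then P i j * pathProb P n y else 0 := by
        intro y
        simp [Finset.sum_ite_eq]
      calc ∑ y : Fin (n + 1) → S, P i (y 0) * pathProb P n y
          = ∑ y : Fin (n + 1) → S, ∑ j : S,
              if y 0 = j then P i j * pathProb P n y else 0 :=
            Finset.sum_congr rfl fun y _ => key y
        _ = ∑ j : S, ∑ y : Fin (n + 1) → S,
              if y 0 = j then P i j * pathProb P n y else 0 := Finset.sum_comm
        _ = ∑ j : S, P i j *
              ∑ y : Fin (n + 1) → S, if y 0 = j then pathProb P n y else 0 := by
            refine Finset.sum_congr rfl fun j _ => ?_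
            rw [Finset.mul_sum]
            exact Finset.sum_congr rfl fun y _ => by rw [mul_ite, mul_zero]
        _ = 1 := by
            simp only [ih]
            simpa using hP1 i
    · intro x
      have hx : pathProb P (n + 1) x
          = P (x 0) (Fin.tail x 0) * pathProb P n (Fin.tail x) := by
        conv_lhs => rw [← Fin.cons_self_tail x]
        rw [pathProb_cons]
      simp [hx, Fin.consEquiv, Fin.tail]
      congr

end aux

section aux2
set_option linter.unusedSectionVars false
variable {S : Type*} [Fintype S] [DecidableEq S] (P : Matrix S S ℝ) (U : Finset S)

lemma occProb_nonneg (hP0 : ∀ i j, 0 ≤ P i j) (i : S) (n k : ℕ) :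
    0 ≤ occProb P U i n k :=
  Finset.sum_nonneg fun x _ => pathProb_nonneg P hP0 n x

lemma occProb_le_one (hP0 : ∀ i j, 0 ≤ P i j) (hP1 : ∀ i, ∑ j, P i j = 1)
    (i : S) (n k : ℕ) : occProb P U i n k ≤ 1 := by
  rw [occProb_eq]
  calc (∑ x : Fin (n + 1) → S,
        if x 0 = i ∧ occCount U n x = k then pathProb P n x else 0)
      ≤ ∑ x : Fin (n + 1) → S, (if x 0 = i then pathProb P n x else 0) := by
        refine Finset.sum_le_sum fun x _ => ?_
        by_cases h1 : x 0 = i <;> by_cases h2 : occCount U n x = k <;>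
          simp [h1, h2, pathProb_nonneg P hP0 n x]
    _ = 1 := sum_pathProb P hP1 n i

lemma occProb_of_lt (i : S) (n k : ℕ) (h : n < k) : occProb P U i n k = 0 := by
  rw [occProb_eq]
  refine Finset.sum_eq_zero fun x _ => ?_
  have hle : occCount U n x ≤ n := by
    simpa [occCount] using Finset.card_filter_le Finset.univ
      (fun m : Fin n => x m.succ ∈ U)
  have : ¬ (x 0 = i ∧ occCount U n x = k) := fun ⟨_, h2⟩ => by omega
  simp [this]

lemma occProb_succ (i : S) (n k : ℕ) (hk : 1 ≤ k) :
    occProb P U i (n + 1) k = ∑ j : S, P i j *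
      (if j ∈ U then occProb P U j n (k - 1) else occProb P U j n k) := by
  rw [occProb_eq]
  rw [Fintype.sum_equiv (Fin.consEquiv (fun _ : Fin (n + 2) => S)).symm _
    (fun p : S × (Fin (n + 1) → S) =>
      if p.1 = i ∧ (if p.2 0 ∈ U then 1 else 0) + occCount U n p.2 = k
      then P p.1 (p.2 0) * pathProb P n p.2 else 0)]
  · rw [Fintype.sum_prod_type]
    have pull : ∀ a : S, (∑ y : Fin (n + 1) → S,
        if a = i ∧ (if y 0 ∈ U then 1 else 0) + occCount U n y = k
        then P a (y 0) * pathProb P n y else 0)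
        = if a = i then (∑ y : Fin (n + 1) → S,
            if (if y 0 ∈ U then 1 else 0) + occCount U n y = k
            then P a (y 0) * pathProb P n y else 0) else 0 := by
      intro a
      by_cases h : a = i <;> simp [h]
    simp only [pull]
    rw [Fintype.sum_ite_eq' i]
    have key : ∀ y : Fin (n + 1) → S,
        (if (if y 0 ∈ U then 1 else 0) + occCount U n y = k
          then P i (y 0) * pathProb P n y else 0)
        = ∑ j : S, if y 0 = j ∧ (if j ∈ U then occCount U n y = k - 1
            else occCount U n y = k)
          then P i j * pathProb P n y else 0 := by
      intro y
      rw [Finset.sum_eq_single (y 0)]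
      · by_cases hy : y 0 ∈ U <;> [
          (have : ((1 : ℕ) + occCount U n y = k) ↔ occCount U n y = k - 1 := by
            omega);
          skip] <;> simp [hy, *]
      · intro j _ hj
        have : ¬ (y 0 = j) := fun h => hj h.symm
        simp [this]
      · simp
    rw [Finset.sum_congr rfl fun y _ => key y, Finset.sum_comm]
    refine Finset.sum_congr rfl fun j _ => ?_
    by_cases hj : j ∈ U
    · simp only [if_pos hj, occProb_eq, Finset.mul_sum]
      exact Finset.sum_congr rfl fun y _ => by rw [mul_ite, mul_zero]
    · simp only [if_neg hj, occProb_eq, Finset.mul_sum]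
      exact Finset.sum_congr rfl fun y _ => by rw [mul_ite, mul_zero]
  · intro x
    have hx : pathProb P (n + 1) x
        = P (x 0) (Fin.tail x 0) * pathProb P n (Fin.tail x) := by
      conv_lhs => rw [← Fin.cons_self_tail x]
      rw [pathProb_cons]
    have hocc : occCount U (n + 1) x
        = (if Fin.tail x 0 ∈ U then 1 else 0) + occCount U n (Fin.tail x) := by
      conv_lhs => rw [← Fin.cons_self_tail x]
      rw [occCount_cons]
    simp [hx, hocc, Fin.consEquiv, Fin.tail]
    congr

end aux2

theorem stmt3 {S : Type*} [Fintype S] [DecidableEq S] [Nonempty S]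
    (P : Matrix S S ℝ) (hP0 : ∀ i j, 0 ≤ P i j) (hP1 : ∀ i, ∑ j, P i j = 1)
    (U : Finset S) (A B : Matrix S S ℝ)
    (hA : ∀ i j, A i j = if j ∈ U then P i j else 0)
    (hB : ∀ i j, B i j = if j ∉ U then P i j else 0)
    (t : ℝ) (ht : |t| < 1) :
    (∀ (i : S) (k : ℕ), Summable (fun n : ℕ => occProb P U i (n + k) k * t ^ n)) ∧
    ∀ k : ℕ, 1 ≤ k →
      (fun i : S => ∑' n : ℕ, occProb P U i (n + k) k * t ^ n) =
        A *ᵥ (fun i : S => ∑' n : ℕ, occProb P U i (n + (k - 1)) (k - 1) * t ^ n) +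
        t • (B *ᵥ fun i : S => ∑' n : ℕ, occProb P U i (n + k) k * t ^ n) := by
  have hsum : ∀ (i : S) (k : ℕ) (m : ℕ → ℕ),
      Summable (fun n : ℕ => occProb P U i (m n) k * t ^ n) := by
    intro i k m
    have hgeo : Summable (fun n : ℕ => |t| ^ n) :=
      summable_geometric_of_lt_one (abs_nonneg t) ht
    refine Summable.of_abs ?_
    refine hgeo.of_nonneg_of_le (fun n => abs_nonneg _) fun n => ?_
    rw [abs_mul, abs_pow]
    have h1 : |occProb P U i (m n) k| ≤ 1 :=
      abs_le.mpr ⟨by linarith [occProb_nonneg P U hP0 i (m n) k],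
        occProb_le_one P U hP0 hP1 i (m n) k⟩
    calc |occProb P U i (m n) k| * |t| ^ n ≤ 1 * |t| ^ n :=
          mul_le_mul_of_nonneg_right h1 (pow_nonneg (abs_nonneg t) n)
      _ = |t| ^ n := one_mul _
  refine ⟨fun i k => hsum i k (fun n => n + k), ?_⟩
  intro k hk
  funext i
  have hrec : ∀ n : ℕ, occProb P U i (n + k) k
      = ∑ j : S, A i j * occProb P U j (n + (k - 1)) (k - 1)
        + ∑ j : S, B i j * occProb P U j (n + (k - 1)) k := by
    intro n
    have hnk : n + k = (n + (k - 1)) + 1 := by omega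
    rw [hnk, occProb_succ P U i _ k hk, ← Finset.sum_add_distrib]
    refine Finset.sum_congr rfl fun j _ => ?_
    by_cases hj : j ∈ U <;> simp [hA, hB, hj] <;> ring
  have sG1 : ∀ j : S, Summable
      (fun n : ℕ => occProb P U j (n + (k - 1)) (k - 1) * t ^ n) :=
    fun j => hsum j (k - 1) _
  have sG2 : ∀ j : S, Summable (fun n : ℕ => occProb P U j (n + k) k * t ^ n) :=
    fun j => hsum j k _
  have sG2' : ∀ j : S, Summable
      (fun n : ℕ => occProb P U j (n + (k - 1)) k * t ^ n) :=
    fun j => hsum j k _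
  have sA : ∀ j : S, Summable
      (fun n : ℕ => A i j * (occProb P U j (n + (k - 1)) (k - 1) * t ^ n)) :=
    fun j => (sG1 j).mul_left _
  have sB : ∀ j : S, Summable
      (fun n : ℕ => B i j * (occProb P U j (n + (k - 1)) k * t ^ n)) :=
    fun j => (sG2' j).mul_left _
  have shift : ∀ j : S, (∑' n : ℕ, occProb P U j (n + (k - 1)) k * t ^ n)
      = t * ∑' n : ℕ, occProb P U j (n + k) k * t ^ n := by
    intro j
    rw [Summable.tsum_eq_zero_add (sG2' j)]
    have h0 : occProb P U j (0 + (k - 1)) k = 0 :=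
      occProb_of_lt P U j _ k (by omega)
    have hstep : ∀ n : ℕ, occProb P U j (n + 1 + (k - 1)) k * t ^ (n + 1)
        = t * (occProb P U j (n + k) k * t ^ n) := by
      intro n
      have h2 : n + 1 + (k - 1) = n + k := by omega
      rw [h2, pow_succ]
      ring
    rw [h0, tsum_congr hstep, tsum_mul_left]
    ring
  calc (∑' n : ℕ, occProb P U i (n + k) k * t ^ n)
      = ∑' n : ℕ, ((∑ j : S, A i j * (occProb P U j (n + (k - 1)) (k - 1) * t ^ n))
          + ∑ j : S, B i j * (occProb P U j (n + (k - 1)) k * t ^ n)) := by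
        refine tsum_congr fun n => ?_
        rw [hrec n, add_mul, Finset.sum_mul, Finset.sum_mul]
        congr 1 <;> exact Finset.sum_congr rfl fun j _ => by ring
    _ = (∑' n : ℕ, ∑ j : S, A i j * (occProb P U j (n + (k - 1)) (k - 1) * t ^ n))
          + ∑' n : ℕ, ∑ j : S, B i j * (occProb P U j (n + (k - 1)) k * t ^ n) :=
        Summable.tsum_add (summable_sum fun j _ => sA j) (summable_sum fun j _ => sB j)
    _ = (∑ j : S, ∑' n : ℕ, A i j * (occProb P U j (n + (k - 1)) (k - 1) * t ^ n))
          + ∑ j : S, ∑' n : ℕ, B i j * (occProb P U j (n + (k - 1)) k * t ^ n) := by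
        rw [Summable.tsum_finsetSum fun j _ => sA j, Summable.tsum_finsetSum fun j _ => sB j]
    _ = (∑ j : S, A i j * ∑' n : ℕ, occProb P U j (n + (k - 1)) (k - 1) * t ^ n)
          + ∑ j : S, B i j * (t * ∑' n : ℕ, occProb P U j (n + k) k * t ^ n) := by
        congr 1
        · exact Finset.sum_congr rfl fun j _ => tsum_mul_left
        · refine Finset.sum_congr rfl fun j _ => ?_
          rw [tsum_mul_left, shift j]
    _ = (A *ᵥ (fun i : S => ∑' n : ℕ,
            occProb P U i (n + (k - 1)) (k - 1) * t ^ n) +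
          t • (B *ᵥ fun i : S => ∑' n : ℕ, occProb P U i (n + k) k * t ^ n)) i := by
        simp only [Pi.add_apply, Pi.smul_apply, Matrix.mulVec, dotProduct,
          smul_eq_mul, Finset.mul_sum]
        congr 1
        exact Finset.sum_congr rfl fun j _ => by ring
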